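/- Let f : ℂ → ℂ belong to OM₊ and satisfy: f(1) = 1; f(x) = x·f(1/x) for all real x > 0; and there exist positive reals c₁ ≠ 1 and c₂ ≠ 1 with (log c₁)/(log c₂) irrational such that f(c₁²·x) = c₁·f(x) and f(c₂²·x) = c₂·f(x) for all real x > 0. Then f(z) = √z for every z ∈ ℂ ∖ (−∞,0], where √ is the principal square root. -/

import Mathlib

open Complex MeasureTheory Filter

noncomputable section

/-- The open horizontal strip `D = {w : ℂ | -π < Im w < π}`. -/
def strip : Set ℂ := {w : ℂ | -Real.pi < w.im ∧ w.im < Real.pi}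

/-- The class `OM₊`: functions analytic on the slit plane `ℂ \ (-∞,0]`,
nonnegative real on the positive real axis, with nonnegative imaginary part
on the upper half-plane. -/
def OMplus (f : ℂ → ℂ) : Prop :=
  DifferentiableOn ℂ f Complex.slitPlane ∧
  (∀ x : ℝ, 0 < x → ∃ t : ℝ, 0 ≤ t ∧ f (x : ℂ) = (t : ℂ)) ∧
  (∀ z : ℂ, 0 < z.im → 0 ≤ (f z).im)

lemma slit_preconn : IsPreconnected Complex.slitPlane := by
  apply isPreconnected_of_forall (1 : ℂ)
  intro y hy
  exact ⟨segment ℝ 1 y, Complex.starConvex_one_slitPlane.segment_subset hy,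
    left_mem_segment _ _ _, right_mem_segment _ _ _, (convex_segment _ _).isPreconnected⟩

/-- Characterization of the geometric mean: if `f ∈ OM₊` satisfies `f(1) = 1`,
the symmetry `f(x) = x·f(1/x)` for `x > 0`, and two scaling laws
`f(cᵢ²x) = cᵢ·f(x)` (`i = 1,2`) with logarithmically incommensurate
`c₁, c₂ ≠ 1`, then `f` is the principal square root on the slit plane. -/
theorem stmt_19 (f : ℂ → ℂ) (hf : OMplus f) (h1 : f 1 = 1)
    (hsym : ∀ x : ℝ, 0 < x → f (x : ℂ) = (x : ℂ) * f ((x : ℂ)⁻¹))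
    (c₁ c₂ : ℝ) (hc₁ : 0 < c₁) (hc₁' : c₁ ≠ 1) (hc₂ : 0 < c₂) (hc₂' : c₂ ≠ 1)
    (hirr : Irrational (Real.log c₁ / Real.log c₂))
    (hfc₁ : ∀ x : ℝ, 0 < x → f ((c₁ ^ 2 * x : ℝ) : ℂ) = (c₁ : ℂ) * f (x : ℂ))
    (hfc₂ : ∀ x : ℝ, 0 < x → f ((c₂ ^ 2 * x : ℝ) : ℂ) = (c₂ : ℂ) * f (x : ℂ)) :
    ∀ z ∈ Complex.slitPlane, f z = z ^ (1 / 2 : ℂ) := by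
  obtain ⟨hdiff, hreal, him⟩ := hf
  have hmem : ∀ x : ℝ, 0 < x → (x : ℂ) ∈ Complex.slitPlane :=
    fun x hx => Complex.ofReal_mem_slitPlane.2 hx
  have hcont : ContinuousOn f Complex.slitPlane := hdiff.continuousOn
  -- the auxiliary function g
  set g : ℝ → ℂ := fun t => f ((Real.exp t : ℝ) : ℂ) / ((Real.exp (t / 2) : ℝ) : ℂ) with hgdef
  have hgcont : Continuous g := by
    apply Continuous.div
    · exact hcont.comp_continuous
        (Complex.continuous_ofReal.comp Real.continuous_exp)
        (fun t => hmem _ (Real.exp_pos t))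
    · exact Complex.continuous_ofReal.comp (Real.continuous_exp.comp (by fun_prop))
    · intro t
      exact_mod_cast (Real.exp_pos (t / 2)).ne'
  -- periodicity of g
  have hper : ∀ c : ℝ, 0 < c →
      (∀ x : ℝ, 0 < x → f ((c ^ 2 * x : ℝ) : ℂ) = (c : ℂ) * f (x : ℂ)) →
      ∀ t : ℝ, g (t + 2 * Real.log c) = g t := by
    intro c hc hfc t
    have he : Real.exp (t + 2 * Real.log c) = c ^ 2 * Real.exp t := by
      rw [Real.exp_add, mul_comm]
      congr 1
      rw [show (2 : ℝ) * Real.log c = Real.log (c ^ 2) by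
            rw [Real.log_pow]; push_cast; ring,
          Real.exp_log (by positivity)]
    have he2 : Real.exp ((t + 2 * Real.log c) / 2) = Real.exp (t / 2) * c := by
      rw [show (t + 2 * Real.log c) / 2 = t / 2 + Real.log c by ring,
        Real.exp_add, Real.exp_log hc]
    have h3 := hfc (Real.exp t) (Real.exp_pos t)
    simp only [hgdef, he, he2, h3]
    have hcne : (c : ℂ) ≠ 0 := by exact_mod_cast hc.ne'
    have hene : ((Real.exp (t / 2) : ℝ) : ℂ) ≠ 0 := by
      exact_mod_cast (Real.exp_pos (t / 2)).ne'
    push_cast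
    field_simp
  -- the subgroup of periods
  set P : AddSubgroup ℝ :=
    { carrier := {p | ∀ t, g (t + p) = g t}
      zero_mem' := by intro t; simp
      add_mem' := by
        intro a b ha hb t
        rw [← add_assoc, hb (t + a), ha t]
      neg_mem' := by
        intro a ha t
        have := ha (t + -a)
        simp only [neg_add_cancel_right] at this
        exact this.symm } with hPdef
  have hp₁ : (2 * Real.log c₁) ∈ P := hper c₁ hc₁ hfc₁
  have hp₂ : (2 * Real.log c₂) ∈ P := hper c₂ hc₂ hfc₂
  have hl₁ : Real.log c₁ ≠ 0 := Real.log_ne_zero_of_pos_of_ne_one hc₁ hc₁'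
  have hl₂ : Real.log c₂ ≠ 0 := Real.log_ne_zero_of_pos_of_ne_one hc₂ hc₂'
  have hdense : Dense (P : Set ℝ) := by
    rcases P.dense_or_cyclic with h | ⟨a, ha⟩
    · exact h
    · exfalso
      rw [ha] at hp₁ hp₂
      obtain ⟨n, hn⟩ := AddSubgroup.mem_closure_singleton.1 hp₁
      obtain ⟨m, hm⟩ := AddSubgroup.mem_closure_singleton.1 hp₂
      have hane : a ≠ 0 := by
        rintro rfl
        simp only [smul_zero] at hm
        exact hl₂ (by linarith [hm.symm ▸ (by norm_num : (0:ℝ) = 0)] <;> nlinarith)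
      have hmne : (m : ℝ) ≠ 0 := by
        intro h
        apply hl₂
        have : (2 : ℝ) * Real.log c₂ = 0 := by
          rw [← hm, zsmul_eq_mul, h, zero_mul]
        linarith
      apply hirr
      refine ⟨(n : ℚ) / (m : ℚ), ?_⟩
      have hn' : (n : ℝ) * a = 2 * Real.log c₁ := by rw [← hn, zsmul_eq_mul]
      have hm' : (m : ℝ) * a = 2 * Real.log c₂ := by rw [← hm, zsmul_eq_mul]
      push_cast
      rw [div_eq_div_iff (by exact_mod_cast hmne) hl₂]
      have key : (n : ℝ) * (2 * Real.log c₂) = (m : ℝ) * (2 * Real.log c₁) := by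
        rw [← hn', ← hm']; ring
      linarith [key]
  -- g is constant
  have hgconst : ∀ t, g t = g 0 := by
    have hclosed : IsClosed {t : ℝ | g t = g 0} := isClosed_eq hgcont continuous_const
    have hsub : (P : Set ℝ) ⊆ {t : ℝ | g t = g 0} := by
      intro p hp
      have := hp 0
      simpa using this
    intro t
    have : closure (P : Set ℝ) ⊆ {t : ℝ | g t = g 0} := hclosed.closure_subset_iff.2 hsub
    exact this (hdense t)
  have hg0 : g 0 = 1 := by
    simp only [hgdef]
    norm_num [Real.exp_zero, h1]
  -- f equals sqrt on positive reals
  have hpos : ∀ x : ℝ, 0 < x → f (x : ℂ) = (x : ℂ) ^ (1 / 2 : ℂ) := by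
    intro x hx
    have ht := (hgconst (Real.log x)).trans hg0
    simp only [hgdef, Real.exp_log hx] at ht
    have hene : ((Real.exp (Real.log x / 2) : ℝ) : ℂ) ≠ 0 := by
      exact_mod_cast (Real.exp_pos _).ne'
    have hfx : f (x : ℂ) = ((Real.exp (Real.log x / 2) : ℝ) : ℂ) :=
      (div_eq_one_iff_eq hene).1 ht
    rw [hfx]
    rw [show ((1 : ℂ) / 2) = ((1 / 2 : ℝ) : ℂ) by norm_num]
    rw [← Complex.ofReal_cpow hx.le]
    congr 1
    rw [Real.rpow_def_of_pos hx]
    ring_nf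
  -- identity theorem
  have hf_an : AnalyticOnNhd ℂ f Complex.slitPlane :=
    hdiff.analyticOnNhd Complex.isOpen_slitPlane
  have hg_an : AnalyticOnNhd ℂ (fun z => z ^ (1 / 2 : ℂ)) Complex.slitPlane := by
    intro z hz
    exact (analyticAt_id.cpow analyticAt_const hz)
  have hfreq : ∃ᶠ z in nhdsWithin (1 : ℂ) {(1 : ℂ)}ᶜ, f z = z ^ (1 / 2 : ℂ) := by
    have h1' : Tendsto (fun n : ℕ => (1 + ((n : ℝ) + 1)⁻¹ : ℝ)) atTop (nhds 1) := by
      have : Tendsto (fun n : ℕ => ((n : ℝ) + 1)⁻¹) atTop (nhds 0) :=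
        tendsto_one_div_add_atTop_nhds_zero_nat.congr (by intro n; rw [one_div])
      simpa using tendsto_const_nhds.add this
    have htend : Tendsto (fun n : ℕ => ((1 + ((n : ℝ) + 1)⁻¹ : ℝ) : ℂ)) atTop
        (nhdsWithin (1 : ℂ) {(1 : ℂ)}ᶜ) := by
      rw [tendsto_nhdsWithin_iff]
      constructor
      · have h2 := (Complex.continuous_ofReal.tendsto 1).comp h1'
        rw [Complex.ofReal_one] at h2
        exact h2
      · refine Filter.Eventually.of_forall fun n => ?_
        simp only [Set.mem_compl_iff, Set.mem_singleton_iff]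
        intro h
        have : (1 + ((n : ℝ) + 1)⁻¹ : ℝ) = 1 := by exact_mod_cast h
        have hpos' : (0 : ℝ) < ((n : ℝ) + 1)⁻¹ := by positivity
        linarith
    exact htend.frequently (Frequently.of_forall fun n => hpos _ (by positivity))
  have heq : Set.EqOn f (fun z => z ^ (1 / 2 : ℂ)) Complex.slitPlane :=
    hf_an.eqOn_of_preconnected_of_frequently_eq hg_an slit_preconn
      Complex.one_mem_slitPlane hfreq
  exact fun z hz => heq hz
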